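/- (Hierarchy induction step.) Let ρ₀ > 0 and c be real constants and let u : ℝ × ℝ → ℝ be smooth, satisfying ρ₀·∂ₜₜu = c·∂ₓₓu at every point. Define u¹ = ½ρ₀·(∂ₜu)² + ½c·(∂ₓu)². Then u¹ satisfies the same wave equation: ρ₀·∂ₜₜu¹ = c·∂ₓₓu¹ at every point (equations (5.2)/(5.7) of the paper). -/

import Mathlib

open MeasureTheory

/-- Partial derivative in the first (space) variable. -/
noncomputable def dX (f : ℝ × ℝ → ℝ) : ℝ × ℝ → ℝ := fun p => deriv (fun x => f (x, p.2)) p.1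

/-- Partial derivative in the second (time) variable. -/
noncomputable def dT (f : ℝ × ℝ → ℝ) : ℝ × ℝ → ℝ := fun p => deriv (fun t => f (p.1, t)) p.2

section Helpers

variable {f g h k : ℝ × ℝ → ℝ}

private lemma hasDerivAt_sliceX (hf : Differentiable ℝ f) (p : ℝ × ℝ) :
    HasDerivAt (fun x => f (x, p.2)) (fderiv ℝ f p ((1:ℝ), (0:ℝ))) p.1 := by
  have h1 : HasDerivAt (fun x : ℝ => (x, p.2)) ((1:ℝ), (0:ℝ)) p.1 :=
    (hasDerivAt_id p.1).prodMk (hasDerivAt_const p.1 p.2)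
  exact ((hf p).hasFDerivAt).comp_hasDerivAt p.1 h1

private lemma hasDerivAt_sliceT (hf : Differentiable ℝ f) (p : ℝ × ℝ) :
    HasDerivAt (fun t => f (p.1, t)) (fderiv ℝ f p ((0:ℝ), (1:ℝ))) p.2 := by
  have h1 : HasDerivAt (fun t : ℝ => (p.1, t)) ((0:ℝ), (1:ℝ)) p.2 :=
    (hasDerivAt_const p.2 p.1).prodMk (hasDerivAt_id p.2)
  exact ((hf p).hasFDerivAt).comp_hasDerivAt p.2 h1

private lemma dX_eq (hf : Differentiable ℝ f) (p : ℝ × ℝ) :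
    dX f p = fderiv ℝ f p ((1:ℝ), (0:ℝ)) := (hasDerivAt_sliceX hf p).deriv

private lemma dT_eq (hf : Differentiable ℝ f) (p : ℝ × ℝ) :
    dT f p = fderiv ℝ f p ((0:ℝ), (1:ℝ)) := (hasDerivAt_sliceT hf p).deriv

private lemma hasDerivAt_dX (hf : Differentiable ℝ f) (p : ℝ × ℝ) :
    HasDerivAt (fun x => f (x, p.2)) (dX f p) p.1 := by
  rw [dX_eq hf p]; exact hasDerivAt_sliceX hf p

private lemma hasDerivAt_dT (hf : Differentiable ℝ f) (p : ℝ × ℝ) :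
    HasDerivAt (fun t => f (p.1, t)) (dT f p) p.2 := by
  rw [dT_eq hf p]; exact hasDerivAt_sliceT hf p

private lemma fderiv_apply_smooth (hf : ContDiff ℝ (⊤ : ℕ∞) f) (v : ℝ × ℝ) :
    ContDiff ℝ (⊤ : ℕ∞) (fun p => fderiv ℝ f p v) :=
  (hf.fderiv_right (m := (⊤ : ℕ∞)) (by simp)).clm_apply contDiff_const

private lemma dX_smooth (hf : ContDiff ℝ (⊤ : ℕ∞) f) : ContDiff ℝ (⊤ : ℕ∞) (dX f) := by
  have : dX f = fun p => fderiv ℝ f p ((1:ℝ), (0:ℝ)) :=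
    funext (dX_eq (hf.differentiable (by simp)))
  rw [this]; exact fderiv_apply_smooth hf _

private lemma dT_smooth (hf : ContDiff ℝ (⊤ : ℕ∞) f) : ContDiff ℝ (⊤ : ℕ∞) (dT f) := by
  have : dT f = fun p => fderiv ℝ f p ((0:ℝ), (1:ℝ)) :=
    funext (dT_eq (hf.differentiable (by simp)))
  rw [this]; exact fderiv_apply_smooth hf _

private lemma fderiv_fderiv_apply (hf : ContDiff ℝ (⊤ : ℕ∞) f) (p v w : ℝ × ℝ) :
    fderiv ℝ (fun q => fderiv ℝ f q v) p w = fderiv ℝ (fderiv ℝ f) p w v := by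
  have hd2 : Differentiable ℝ (fderiv ℝ f) :=
    (hf.fderiv_right (m := (⊤ : ℕ∞)) (by simp)).differentiable (by simp)
  rw [fderiv_clm_apply (hd2 p) (differentiableAt_const v)]
  simp

/-- Clairaut / Schwarz symmetry for smooth functions. -/
private lemma dXdT_comm (hf : ContDiff ℝ (⊤ : ℕ∞) f) (p : ℝ × ℝ) :
    dX (dT f) p = dT (dX f) p := by
  have hdf : Differentiable ℝ f := hf.differentiable (by simp)
  have hd2 : Differentiable ℝ (fderiv ℝ f) :=
    (hf.fderiv_right (m := (⊤ : ℕ∞)) (by simp)).differentiable (by simp)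
  have hT : dT f = fun q => fderiv ℝ f q ((0:ℝ), (1:ℝ)) := funext (dT_eq hdf)
  have hX : dX f = fun q => fderiv ℝ f q ((1:ℝ), (0:ℝ)) := funext (dX_eq hdf)
  have hTd : Differentiable ℝ (dT f) := (dT_smooth hf).differentiable (by simp)
  have hXd : Differentiable ℝ (dX f) := (dX_smooth hf).differentiable (by simp)
  rw [dX_eq hTd p, dT_eq hXd p, hT, hX, fderiv_fderiv_apply hf,
    fderiv_fderiv_apply hf]
  exact second_derivative_symmetric (fun y => (hdf y).hasFDerivAt)
    ((hd2 p).hasFDerivAt) _ _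

/-- Time-derivative of a combination `a*(f*g) + b*(h*k)`. -/
private lemma dT_comb (a b : ℝ) (hf : Differentiable ℝ f) (hg : Differentiable ℝ g)
    (hh : Differentiable ℝ h) (hk : Differentiable ℝ k) (p : ℝ × ℝ) :
    dT (fun q => a * (f q * g q) + b * (h q * k q)) p
      = a * (dT f p * g p + f p * dT g p) + b * (dT h p * k p + h p * dT k p) := by
  have H : HasDerivAt (fun t => a * (f (p.1, t) * g (p.1, t)) + b * (h (p.1, t) * k (p.1, t)))
      (a * (dT f p * g p + f p * dT g p) + b * (dT h p * k p + h p * dT k p)) p.2 := by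
    have := ((((hasDerivAt_dT hf p).mul (hasDerivAt_dT hg p)).const_mul a).add
      (((hasDerivAt_dT hh p).mul (hasDerivAt_dT hk p)).const_mul b))
    exact this
  exact H.deriv

/-- Space-derivative of a combination `a*(f*g) + b*(h*k)`. -/
private lemma dX_comb (a b : ℝ) (hf : Differentiable ℝ f) (hg : Differentiable ℝ g)
    (hh : Differentiable ℝ h) (hk : Differentiable ℝ k) (p : ℝ × ℝ) :
    dX (fun q => a * (f q * g q) + b * (h q * k q)) p
      = a * (dX f p * g p + f p * dX g p) + b * (dX h p * k p + h p * dX k p) := by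
  have H : HasDerivAt (fun x => a * (f (x, p.2) * g (x, p.2)) + b * (h (x, p.2) * k (x, p.2)))
      (a * (dX f p * g p + f p * dX g p) + b * (dX h p * k p + h p * dX k p)) p.1 := by
    have := ((((hasDerivAt_dX hf p).mul (hasDerivAt_dX hg p)).const_mul a).add
      (((hasDerivAt_dX hh p).mul (hasDerivAt_dX hk p)).const_mul b))
    exact this
  exact H.deriv

/-- Time-derivative of a constant multiple. -/
private lemma dT_cmul (a : ℝ) (hf : Differentiable ℝ f) (p : ℝ × ℝ) :
    dT (fun q => a * f q) p = a * dT f p :=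
  (((hasDerivAt_dT hf p)).const_mul a).deriv

/-- Space-derivative of a constant multiple. -/
private lemma dX_cmul (a : ℝ) (hf : Differentiable ℝ f) (p : ℝ × ℝ) :
    dX (fun q => a * f q) p = a * dX f p :=
  (((hasDerivAt_dX hf p)).const_mul a).deriv

end Helpers

/-- Equations (5.2)/(5.7) (hierarchy induction step): if u solves the wave equation
ρ₀ ∂ₜₜu = c ∂ₓₓu, then so does its energy density u¹ = ½ρ₀(∂ₜu)² + ½c(∂ₓu)². -/
theorem hierarchy_induction_step (ρ₀ c : ℝ) (hρ : 0 < ρ₀)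
    (u : ℝ × ℝ → ℝ) (hu : ContDiff ℝ (⊤ : ℕ∞) u)
    (hwave : ∀ p : ℝ × ℝ, ρ₀ * dT (dT u) p = c * dX (dX u) p)
    (u₁ : ℝ × ℝ → ℝ)
    (hu₁ : u₁ = fun p => ρ₀ / 2 * (dT u p) ^ 2 + c / 2 * (dX u p) ^ 2) :
    ∀ p : ℝ × ℝ, ρ₀ * dT (dT u₁) p = c * dX (dX u₁) p := by
  intro p
  set f := dT u with hf_def
  set g := dX u with hg_def
  have hf : ContDiff ℝ (⊤ : ℕ∞) f := dT_smooth hu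
  have hg : ContDiff ℝ (⊤ : ℕ∞) g := dX_smooth hu
  have hfd : Differentiable ℝ f := hf.differentiable (by simp)
  have hgd : Differentiable ℝ g := hg.differentiable (by simp)
  have hTfd : Differentiable ℝ (dT f) := (dT_smooth hf).differentiable (by simp)
  have hXfd : Differentiable ℝ (dX f) := (dX_smooth hf).differentiable (by simp)
  have hTgd : Differentiable ℝ (dT g) := (dT_smooth hg).differentiable (by simp)
  have hXgd : Differentiable ℝ (dX g) := (dX_smooth hg).differentiable (by simp)
  -- commutation: dT g = dX f as functions
  have hC : dT g = dX f := by
    funext q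
    rw [hg_def, hf_def]
    exact (dXdT_comm hu q).symm
  -- rewrite u₁ in "comb" shape
  have hu₁' : u₁ = fun q => (ρ₀/2) * (f q * f q) + (c/2) * (g q * g q) := by
    rw [hu₁]; funext q; ring
  -- first time derivative of u₁
  have e1 : dT u₁ = fun q => ρ₀ * (f q * dT f q) + c * (g q * dT g q) := by
    funext q
    rw [hu₁', dT_comb (ρ₀/2) (c/2) hfd hfd hgd hgd q]
    ring
  have e1x : dX u₁ = fun q => ρ₀ * (f q * dX f q) + c * (g q * dX g q) := by
    funext q
    rw [hu₁', dX_comb (ρ₀/2) (c/2) hfd hfd hgd hgd q]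
    ring
  -- second derivatives of u₁
  have e2 : dT (dT u₁) p
      = ρ₀ * (dT f p * dT f p + f p * dT (dT f) p)
        + c * (dT g p * dT g p + g p * dT (dT g) p) := by
    rw [e1]; exact dT_comb ρ₀ c hfd hTfd hgd hTgd p
  have e2x : dX (dX u₁) p
      = ρ₀ * (dX f p * dX f p + f p * dX (dX f) p)
        + c * (dX g p * dX g p + g p * dX (dX g) p) := by
    rw [e1x]; exact dX_comb ρ₀ c hfd hXfd hgd hXgd p
  -- wave equation facts
  have W0 : ρ₀ * dT f p = c * dX g p := hwave p
  have Wfun : (fun q => ρ₀ * dT f q) = fun q => c * dX g q := funext hwave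
  have W1 : ρ₀ * dT (dT f) p = c * dT (dX g) p := by
    have := congrArg (fun F => dT F p) Wfun
    rwa [dT_cmul ρ₀ hTfd p, dT_cmul c hXgd p] at this
  have W2 : ρ₀ * dX (dT f) p = c * dX (dX g) p := by
    have := congrArg (fun F => dX F p) Wfun
    rwa [dX_cmul ρ₀ hTfd p, dX_cmul c hXgd p] at this
  -- key pointwise relations
  have h2 : ρ₀ * dT (dT f) p = c * dX (dX f) p := by
    rw [W1, ← dXdT_comm hg p, hC]
  have h3 : ρ₀ * dT (dT g) p = c * dX (dX g) p := by
    rw [hC, ← dXdT_comm hf p]; exact W2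
  have h4 : dT g p = dX f p := by rw [hC]
  rw [e2, e2x]
  linear_combination (ρ₀ * dT f p + c * dX g p) * W0 + ρ₀ * f p * h2
    + c * g p * h3 + ρ₀ * c * (dT g p + dX f p) * h4
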